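/- Suppose that statement Σ holds for every compact Hausdorff countably tight space X: whenever Y ⊆ X with |Y| = ℵ₁ and {W_α}_{α<ω₁}, {V_α}_{α<ω₁} are open subsets of X such that (1) the closure of W_α is included in V_α, (2) |V_α ∩ Y| ≤ ℵ₀, and (3) Y ⊆ ⋃{W_α : α < ω₁}, then Y is σ-closed-discrete in the subspace ⋃{W_α : α < ω₁}. Then in every compact Hausdorff countably tight space, every locally countable subspace of size at most ℵ₁ is σ-discrete. -/

import Mathlib

universe u

/-- The first uncountable ordinal, `ω₁`. -/
noncomputable def omega1 : Ordinal.{0} := (Cardinal.aleph 1).ord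

/-- A space is countably tight if every point in the closure of a set `A` is in the closure of
a countable subset of `A`. -/
def CountablyTight (X : Type u) [TopologicalSpace X] : Prop :=
  ∀ (A : Set X) (x : X), x ∈ closure A → ∃ B ⊆ A, B.Countable ∧ x ∈ closure B

/-!
A set of size `< ℵ₁` is countable, hence a countable union of singletons. A locally countable
`Y` of size `ℵ₁` in a regular space, indexed by `ω₁`, comes with open `V_y ∋ y` meeting `Y`
countably and open `W_y ∋ y` with `closure W_y ⊆ V_y`, so Σ applies; its pieces are discrete.
-/

open Cardinal Set Topology

theorem Set.Countable.exists_iUnion_eq_of_subsingleton {X : Type*} {Y : Set X}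
    (hY : Y.Countable) : ∃ f : ℕ → Set X, (⋃ n, f n) = Y ∧ ∀ n, (f n).Subsingleton := by
  have : Countable Y := hY.to_subtype
  obtain ⟨g, hg⟩ := Countable.exists_injective_nat Y
  refine ⟨fun n => Subtype.val '' (g ⁻¹' {n}), ?_, fun n => ?_⟩
  · simp [← image_iUnion, ← preimage_iUnion, iUnion_of_singleton]
  · rintro _ ⟨a, ha, rfl⟩ _ ⟨b, hb, rfl⟩
    exact congrArg Subtype.val (hg (ha.trans hb.symm))

theorem nonempty_Iio_omega1_equiv {α : Type*} (h : #α = ℵ₁) :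
    Nonempty (Iio omega1 ≃ α) := by
  refine Cardinal.lift_mk_eq'.mp ?_
  rw [mk_Iio_ordinal, omega1, card_ord, h]
  simp

theorem exists_shrinking_cover_Iio_omega1 {X : Type*} [TopologicalSpace X] [RegularSpace X]
    {Y : Set X} (hloc : ∀ y ∈ Y, ∃ U : Set X, IsOpen U ∧ y ∈ U ∧ (U ∩ Y).Countable)
    (hY : #Y = ℵ₁) :
    ∃ W V : Iio omega1 → Set X, (∀ α, IsOpen (W α)) ∧ (∀ α, IsOpen (V α)) ∧
      (∀ α, closure (W α) ⊆ V α) ∧ (∀ α, (V α ∩ Y).Countable) ∧ Y ⊆ ⋃ α, W α := by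
  choose V hVopen hyV hVY using fun y : Y => hloc y y.2
  choose W hW hWV using fun y : Y => (hasBasis_opens_closure (y : X)).mem_iff.1
    ((hVopen y).mem_nhds (hyV y))
  obtain ⟨e⟩ := nonempty_Iio_omega1_equiv hY
  refine ⟨W ∘ e, V ∘ e, fun α => (hW _).2, fun α => hVopen _, fun α => hWV _,
    fun α => hVY _, fun y hy => mem_iUnion.2 ⟨e.symm ⟨y, hy⟩, ?_⟩⟩
  simpa using (hW ⟨y, hy⟩).1

/-- If statement Σ holds for every compact Hausdorff countably tight space — whenever `Y` has
size `ℵ₁` and `{W_α}_{α<ω₁}`, `{V_α}_{α<ω₁}` are open with `cl W_α ⊆ V_α`, `|V_α ∩ Y| ≤ ℵ₀`,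
and `Y ⊆ ⋃ W_α`, then `Y` is σ-closed-discrete in `⋃ W_α` — then in every compact Hausdorff
countably tight space every locally countable subspace of size at most `ℵ₁` is σ-discrete. -/
theorem sigma_implies_sigma_minus
    (hSigma : ∀ (X : Type u) [TopologicalSpace X] [CompactSpace X] [T2Space X],
      CountablyTight X →
      ∀ (Y : Set X), Cardinal.mk Y = Cardinal.aleph 1 →
      ∀ (W V : ↥(Set.Iio omega1) → Set X),
        (∀ α, IsOpen (W α)) → (∀ α, IsOpen (V α)) →
        (∀ α, closure (W α) ⊆ V α) →
        (∀ α, (V α ∩ Y).Countable) →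
        Y ⊆ (⋃ α, W α) →
        ∃ f : ℕ → Set X, (⋃ n, f n) = Y ∧
          ∀ n, (closure (f n) ∩ ⋃ α, W α) ⊆ f n ∧ DiscreteTopology (f n)) :
    ∀ (X : Type u) [TopologicalSpace X] [CompactSpace X] [T2Space X],
      CountablyTight X →
      ∀ (Y : Set X),
        (∀ y ∈ Y, ∃ U : Set X, IsOpen U ∧ y ∈ U ∧ (U ∩ Y).Countable) →
        Cardinal.mk Y ≤ Cardinal.aleph 1 →
        ∃ f : ℕ → Set X, (⋃ n, f n) = Y ∧ ∀ n, DiscreteTopology (f n) := by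
  intro X _ _ _ hX Y hloc hcard
  rcases hcard.lt_or_eq with hlt | heq
  · have hY : Y.Countable := le_aleph0_iff_set_countable.1 (lt_aleph_one_iff.1 hlt)
    obtain ⟨f, hfY, hf⟩ := hY.exists_iUnion_eq_of_subsingleton
    exact ⟨f, hfY, fun n => have := (hf n).coe_sort; inferInstance⟩
  · obtain ⟨W, V, hW, hV, hWV, hVY, hYW⟩ := exists_shrinking_cover_Iio_omega1 hloc heq
    obtain ⟨f, hfY, hf⟩ := hSigma X hX Y heq W V hW hV hWV hVY hYW
    exact ⟨f, hfY, fun n => (hf n).2⟩
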